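/- For all natural numbers k and m, the finite simple continued fraction [L_{2k+1}, L_{2k+1}, …, L_{2k+1}] consisting of m+1 copies of the odd-indexed Lucas number L_{2k+1} equals F_{(2k+1)(m+2)}/F_{(2k+1)(m+1)}. -/

import Mathlib

def cf : List ℤ → ℚ
  | [] => 0
  | [a] => (a : ℚ)
  | a :: b :: l => (a : ℚ) + (cf (b :: l))⁻¹

def lucas : ℕ → ℕ
  | 0 => 2
  | 1 => 1
  | n + 2 => lucas (n + 1) + lucas n

/-! For every `d`, the sequence `u n = F (d * n)` satisfies
`u (n + 2) = L d * u (n + 1) - (-1) ^ d * u n` (the base case is Cassini's identity). For odd `d`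
this is the recurrence of the numerators of the constant continued fraction `[L d, …, L d]`, and
since `u 0 = 0` its values are the quotients `u (m + 2) / u (m + 1)`. -/

lemma cf_cons {l : List ℤ} (hl : l ≠ []) (a : ℤ) : cf (a :: l) = a + (cf l)⁻¹ := by
  obtain ⟨b, l, rfl⟩ := List.exists_cons_of_ne_nil hl
  rfl

lemma cf_replicate_eq_div {c : ℤ} {u : ℕ → ℚ} (h0 : u 0 = 0)
    (hrec : ∀ n, u (n + 2) = c * u (n + 1) + u n) (hne : ∀ n, u (n + 1) ≠ 0) (m : ℕ) :
    cf (List.replicate (m + 1) c) = u (m + 2) / u (m + 1) := by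
  induction m with
  | zero => simp [cf, hrec 0, h0, hne 0]
  | succ m ih =>
    rw [List.replicate_succ, cf_cons (by simp), ih, inv_div, hrec (m + 1)]
    field_simp [hne m, hne (m + 1)]

lemma lucas_add_fib (n : ℕ) : lucas n + Nat.fib n = 2 * Nat.fib (n + 1) := by
  induction n using Nat.twoStepInduction with
  | zero => rfl
  | one => rfl
  | more n ih₁ ih₂ =>
    rw [lucas]
    grind [Nat.fib_add_two]

lemma fib_two_mul_eq_fib_mul_lucas (n : ℕ) : Nat.fib (2 * n) = Nat.fib n * lucas n := by
  rw [Nat.fib_two_mul, ← lucas_add_fib, Nat.add_sub_cancel]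

lemma fib_sq_sub_fib_mul_fib_sub_fib_sq (n : ℕ) :
    (Nat.fib (n + 1) : ℤ) ^ 2 - Nat.fib n * Nat.fib (n + 1) - Nat.fib n ^ 2 = (-1) ^ n := by
  have cassini := Int.fib_succ_mul_fib_pred_sub_fib_sq n
  have hrec := Int.fib_add_two (n - 1)
  simp only [Int.natAbs_natCast, sub_add_cancel, show (n : ℤ) - 1 + 2 = n + 1 by ring]
    at cassini hrec
  rw [← Int.fib_natCast, ← Int.fib_natCast]
  push_cast
  linear_combination cassini + Int.fib (n + 1) * hrec

lemma fib_add_two_mul (d a : ℕ) :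
    (Nat.fib (a + 2 * d) : ℤ) = lucas d * Nat.fib (a + d) - (-1) ^ d * Nat.fib a := by
  induction a using Nat.twoStepInduction with
  | zero =>
    rw [zero_add, zero_add, fib_two_mul_eq_fib_mul_lucas]
    push_cast
    ring
  | one =>
    have hl : (lucas d : ℤ) = 2 * Nat.fib (d + 1) - Nat.fib d := by
      have := lucas_add_fib d; omega
    rw [add_comm 1, add_comm 1, Nat.fib_two_mul_add_one, hl]
    push_cast
    linear_combination -(fib_sq_sub_fib_mul_fib_sub_fib_sq d)
  | more a ih₁ ih₂ =>
    rw [show a + 2 + 2 * d = a + 2 * d + 2 by ring, show a + 2 + d = a + d + 2 by ring]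
    rw [add_right_comm a 1, add_right_comm a 1] at ih₂
    simp only [Nat.fib_add_two, Nat.cast_add]
    linear_combination ih₁ + ih₂

lemma fib_mul_add_two_of_odd {d : ℕ} (hd : Odd d) (n : ℕ) :
    Nat.fib (d * (n + 2)) = lucas d * Nat.fib (d * (n + 1)) + Nat.fib (d * n) := by
  have h := fib_add_two_mul d (d * n)
  rw [hd.neg_one_pow, show d * n + 2 * d = d * (n + 2) by ring,
    show d * n + d = d * (n + 1) by ring] at h
  omega

theorem cf_all_odd_lucas_fib (k m : ℕ) :
    cf (List.replicate (m + 1) ((lucas (2 * k + 1) : ℤ))) =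
      (Nat.fib ((2 * k + 1) * (m + 2)) : ℚ) /
        (Nat.fib ((2 * k + 1) * (m + 1)) : ℚ) := by
  refine cf_replicate_eq_div (u := fun n ↦ (Nat.fib ((2 * k + 1) * n) : ℚ)) (by simp)
    (fun n ↦ ?_) (fun n ↦ ?_) m
  · exact_mod_cast fib_mul_add_two_of_odd (odd_two_mul_add_one k) n
  · simp
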